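/- Let u be a C² solution of the system Δu = ∇H(u) on ℝ^N such that u_i(x) H_{u_i}(u(x)) ≥ 0 for every i and every x ∈ ℝ^N. Then there is a universal constant C > 0 (independent of u, H, N, m and R) such that Σ_{i=1}^m ∫_{B_R} |∇u_i|² dx ≤ C R^{−2} Σ_{i=1}^m ∫_{B_{2R} \ B_R} u_i² dx for every R > 0. -/

import Mathlib

open MeasureTheory Metric Filter Finset

noncomputable section

/-- Partial derivative of `f` at `x` in the `k`-th coordinate direction of `ℝ^N`. -/
def pd {N : ℕ} (f : EuclideanSpace ℝ (Fin N) → ℝ) (k : Fin N)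
    (x : EuclideanSpace ℝ (Fin N)) : ℝ :=
  fderiv ℝ f x (EuclideanSpace.single k 1)

/-- Laplacian of `f` at `x`: the sum of the pure second partial derivatives. -/
def lap {N : ℕ} (f : EuclideanSpace ℝ (Fin N) → ℝ) (x : EuclideanSpace ℝ (Fin N)) : ℝ :=
  ∑ k, pd (pd f k) k x

/-- `H_{u_i}`, the `i`-th partial derivative of `H : ℝ^m → ℝ`. -/
def Hp {m : ℕ} (H : EuclideanSpace ℝ (Fin m) → ℝ) (i : Fin m)
    (p : EuclideanSpace ℝ (Fin m)) : ℝ :=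
  fderiv ℝ H p (EuclideanSpace.single i 1)

/-- `H_{u_i u_j}`, the second mixed partial derivative of `H : ℝ^m → ℝ`. -/
def Hpp {m : ℕ} (H : EuclideanSpace ℝ (Fin m) → ℝ) (i j : Fin m)
    (p : EuclideanSpace ℝ (Fin m)) : ℝ :=
  fderiv ℝ (Hp H i) p (EuclideanSpace.single j 1)

/-- `u` solves the system `Δ u = ∇H(u)` on `Ω`. -/
def IsSolution {N m : ℕ} (H : EuclideanSpace ℝ (Fin m) → ℝ)
    (u : EuclideanSpace ℝ (Fin N) → EuclideanSpace ℝ (Fin m))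
    (Ω : Set (EuclideanSpace ℝ (Fin N))) : Prop :=
  ∀ i : Fin m, ∀ x ∈ Ω, lap (fun y => u y i) x = Hp H i (u x)

/-- `u` is a stable solution of `Δ u = ∇H(u)` on `Ω`: the second variation of the
energy is nonnegative on test functions `ζ_1, …, ζ_m ∈ C¹_c(Ω)`. -/
def Stable {N m : ℕ} (H : EuclideanSpace ℝ (Fin m) → ℝ)
    (u : EuclideanSpace ℝ (Fin N) → EuclideanSpace ℝ (Fin m))
    (Ω : Set (EuclideanSpace ℝ (Fin N))) : Prop :=
  ∀ ζ : Fin m → EuclideanSpace ℝ (Fin N) → ℝ,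
    (∀ i, ContDiff ℝ 1 (ζ i)) → (∀ i, HasCompactSupport (ζ i)) →
    (∀ i, tsupport (ζ i) ⊆ Ω) →
    0 ≤ (∑ i, ∫ x in Ω, ‖gradient (ζ i) x‖ ^ 2) +
        ∑ i, ∑ j, ∫ x in Ω, Hpp H i j (u x) * ζ i x * ζ j x

/-- `u` is a pointwise stable solution of `Δ u = ∇H(u)` on `Ω`: there are `λ ≥ 0`
and nowhere-vanishing `C²` functions `φ_i` with `Δ φ_i = Σ_j H_{u_i u_j}(u) φ_j - λ φ_i`
and `H_{u_i u_j}(u) φ_i φ_j ≤ 0` for `i < j`. -/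
def PointwiseStable {N m : ℕ} (H : EuclideanSpace ℝ (Fin m) → ℝ)
    (u : EuclideanSpace ℝ (Fin N) → EuclideanSpace ℝ (Fin m))
    (Ω : Set (EuclideanSpace ℝ (Fin N))) : Prop :=
  ∃ (lam : ℝ) (φ : Fin m → EuclideanSpace ℝ (Fin N) → ℝ),
    0 ≤ lam ∧ (∀ i, ContDiff ℝ 2 (φ i)) ∧ (∀ i, ∀ x ∈ Ω, φ i x ≠ 0) ∧
    (∀ i, ∀ x ∈ Ω, lap (φ i) x = (∑ j, Hpp H i j (u x) * φ j x) - lam * φ i x) ∧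
    (∀ i j : Fin m, i < j → ∀ x ∈ Ω, Hpp H i j (u x) * φ i x * φ j x ≤ 0)

/-- The system `Δ u = ∇H(u)` is orientable along `u`: there exist nonzero `C¹`
functions `θ_i`, none of which changes sign, with `H_{u_i u_j}(u) θ_i θ_j ≤ 0` for `i < j`. -/
def OrientableAlong {N m : ℕ} (H : EuclideanSpace ℝ (Fin m) → ℝ)
    (u : EuclideanSpace ℝ (Fin N) → EuclideanSpace ℝ (Fin m)) : Prop :=
  ∃ θ : Fin m → EuclideanSpace ℝ (Fin N) → ℝ,
    (∀ i, ContDiff ℝ 1 (θ i)) ∧ (∀ i, ∃ x, θ i x ≠ 0) ∧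
    (∀ i, (∀ x, 0 ≤ θ i x) ∨ (∀ x, θ i x ≤ 0)) ∧
    (∀ i j : Fin m, i < j → ∀ x, Hpp H i j (u x) * θ i x * θ j x ≤ 0)

/-- A function `w : ℝ^N → ℝ` is one-dimensional. -/
def OneDim {N : ℕ} (w : EuclideanSpace ℝ (Fin N) → ℝ) : Prop :=
  ∃ (a : EuclideanSpace ℝ (Fin N)) (g : ℝ → ℝ), ∀ x, w x = g (inner ℝ a x)

/-- `u` is an `H`-monotone solution with respect to the coordinate direction `ν`. -/
def HMonotone {N m : ℕ} (H : EuclideanSpace ℝ (Fin m) → ℝ)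
    (u : EuclideanSpace ℝ (Fin N) → EuclideanSpace ℝ (Fin m)) (ν : Fin N) : Prop :=
  (∀ (i : Fin m) (x : EuclideanSpace ℝ (Fin N)), pd (fun y => u y i) ν x ≠ 0) ∧
  (∀ i j : Fin m, i < j → ∀ x,
    Hpp H i j (u x) * (pd (fun y => u y i) ν x * pd (fun y => u y j) ν x) ≤ 0)

/-- The point `(x', t) ∈ ℝ^{n+1}` built from `x' ∈ ℝ^n` and a last coordinate `t`. -/
def snocPt {n : ℕ} (x' : EuclideanSpace ℝ (Fin n)) (t : ℝ) :
    EuclideanSpace ℝ (Fin (n + 1)) := WithLp.toLp 2 (Fin.snoc (α := fun _ => ℝ) x'.ofLp t)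

/-!
Test the `i`-th equation against `η² u_i` for a cutoff `η` equal to `1` on `B_R`, supported in
`B_{2R}`, with `|∇η| ≤ C/R`. Integrating by parts,
`∫ η² |∇u_i|² + 2 ∫ η u_i ∇η·∇u_i = -∫ η² u_i H_{u_i}(u) ≤ 0`,
and absorbing the cross term by Young's inequality gives `∫ η² |∇u_i|² ≤ 4 ∫ u_i² |∇η|²`.
Since `∇η` lives on the annulus `B_{2R} \ B_R`, summing over `i` yields the estimate with
`C = 16 sup |smoothTransition'|²`.
-/

open Topology InnerProductSpace

theorem exists_abs_deriv_smoothTransition_le :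
    ∃ M : ℝ, 0 < M ∧ ∀ s, |deriv Real.smoothTransition s| ≤ M := by
  have hsupp : HasCompactSupport (deriv Real.smoothTransition) := by
    refine HasCompactSupport.intro (isCompact_Icc (a := (0 : ℝ)) (b := 1)) fun s hs => ?_
    rcases not_and_or.1 hs with hs | hs
    · have hloc : Real.smoothTransition =ᶠ[𝓝 s] fun _ => 0 :=
        eventually_lt_nhds (not_le.1 hs) |>.mono fun t ht =>
          Real.smoothTransition.zero_of_nonpos ht.le
      simp [hloc.deriv_eq]
    · have hloc : Real.smoothTransition =ᶠ[𝓝 s] fun _ => 1 :=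
        eventually_gt_nhds (not_le.1 hs) |>.mono fun t ht =>
          Real.smoothTransition.one_of_one_le ht.le
      simp [hloc.deriv_eq]
  obtain ⟨C, hC⟩ :=
    (Real.smoothTransition.contDiff.continuous_deriv le_rfl).bounded_above_of_compact_support hsupp
  exact ⟨max C 1, by positivity, fun s => (hC s).trans (le_max_left _ _)⟩

theorem Continuous.integrable_of_support_subset {X : Type*} [TopologicalSpace X] [T2Space X]
    [MeasurableSpace X] [OpensMeasurableSpace X] {μ : Measure X} [IsFiniteMeasureOnCompacts μ]
    {F β : Type*} [NormedAddCommGroup F] [Zero β] {f : X → F} {g : X → β} (hf : Continuous f)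
    (hg : HasCompactSupport g)
    (hfg : Function.support f ⊆ Function.support g) : Integrable f μ :=
  hf.integrable_of_hasCompactSupport (hg.mono hfg)

section Gradient

variable {E : Type*} [NormedAddCommGroup E] [InnerProductSpace ℝ E] [CompleteSpace E]

theorem norm_gradient_eq_norm_fderiv (f : E → ℝ) (x : E) : ‖gradient f x‖ = ‖fderiv ℝ f x‖ :=
  (toDual ℝ E).symm.norm_map _

theorem ContDiff.continuous_gradient {f : E → ℝ} (hf : ContDiff ℝ 1 f) :
    Continuous (gradient f) :=
  (toDual ℝ E).symm.continuous.comp (hf.continuous_fderiv one_ne_zero)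

theorem inner_gradient_sq_mul {η w : E → ℝ} {x : E} (hη : DifferentiableAt ℝ η x)
    (hw : DifferentiableAt ℝ w x) (v : E) :
    ⟪gradient (fun y => η y ^ 2 * w y) x, v⟫_ℝ =
      η x ^ 2 * ⟪gradient w x, v⟫_ℝ + 2 * η x * w x * ⟪gradient η x, v⟫_ℝ := by
  simp only [gradient, toDual_symm_apply]
  rw [fderiv_fun_mul (hη.fun_pow 2) hw, fderiv_fun_pow 2 hη]
  simp only [Nat.add_one_sub_one, pow_one, nsmul_eq_mul, Nat.cast_ofNat, add_apply, smul_apply,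
    smul_eq_mul]
  ring

end Gradient

section Cutoff

variable {E : Type*} [NormedAddCommGroup E]

/-- The argument of `smoothTransition` exceeds `1` on `B_R` and is negative off `B_{√3 R}`, so
`annularCutoff R` is locally constant off the annulus `B_{2R} \ B_R`; squaring the norm keeps it
smooth at the origin. -/
def annularCutoff (R : ℝ) (x : E) : ℝ :=
  Real.smoothTransition ((3 * R ^ 2 - ‖x‖ ^ 2) / (2 * R ^ 2))

theorem annularCutoff_eventuallyEq_one {R : ℝ} {x : E} (hx : ‖x‖ < R) :
    annularCutoff R =ᶠ[𝓝 x] fun _ => 1 := by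
  have hR : 0 < R := (norm_nonneg x).trans_lt hx
  filter_upwards [isOpen_ball.mem_nhds (mem_ball_zero_iff.2 hx)] with y hy
  rw [mem_ball_zero_iff] at hy
  refine Real.smoothTransition.one_of_one_le ?_
  rw [le_div_iff₀ (by positivity)]
  nlinarith [norm_nonneg y]

theorem annularCutoff_eventuallyEq_zero {R : ℝ} {x : E} (hR : 0 < R) (hx : 2 * R ≤ ‖x‖) :
    annularCutoff R =ᶠ[𝓝 x] fun _ => 0 := by
  have hnhds : {y : E | 3 * R ^ 2 < ‖y‖ ^ 2} ∈ 𝓝 x :=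
    (isOpen_lt continuous_const (continuous_norm.pow 2)).mem_nhds (by
      change 3 * R ^ 2 < ‖x‖ ^ 2
      nlinarith)
  filter_upwards [hnhds] with y (hy : 3 * R ^ 2 < ‖y‖ ^ 2)
  exact Real.smoothTransition.zero_of_nonpos
    (div_nonpos_of_nonpos_of_nonneg (by linarith) (by positivity))

theorem hasCompactSupport_annularCutoff [ProperSpace E] {R : ℝ} (hR : 0 < R) :
    HasCompactSupport (annularCutoff (E := E) R) :=
  HasCompactSupport.intro (isCompact_closedBall 0 (2 * R)) fun _ hx =>
    (annularCutoff_eventuallyEq_zero hR (not_le.1 (mt mem_closedBall_zero_iff.2 hx)).le).eq_of_nhds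

variable [InnerProductSpace ℝ E]

theorem contDiff_annularCutoff {n : ℕ∞} (R : ℝ) : ContDiff ℝ n (annularCutoff (E := E) R) :=
  Real.smoothTransition.contDiff.comp ((contDiff_const.sub (contDiff_norm_sq ℝ)).div_const _)

theorem fderiv_annularCutoff_eq_zero {R : ℝ} {x : E} (hR : 0 < R)
    (hx : x ∉ ball (0 : E) (2 * R) \ ball 0 R) : fderiv ℝ (annularCutoff R) x = 0 := by
  rcases lt_or_ge ‖x‖ R with h | h
  · rw [(annularCutoff_eventuallyEq_one h).fderiv_eq, fderiv_const_apply]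
  · have h2 : 2 * R ≤ ‖x‖ := not_lt.1 fun h2 =>
      hx ⟨mem_ball_zero_iff.2 h2, fun h1 => (mem_ball_zero_iff.1 h1).not_ge h⟩
    rw [(annularCutoff_eventuallyEq_zero hR h2).fderiv_eq, fderiv_const_apply]

theorem hasFDerivAt_annularCutoff {R : ℝ} (hR : 0 < R) (x : E) :
    HasFDerivAt (annularCutoff R)
      ((-deriv Real.smoothTransition ((3 * R ^ 2 - ‖x‖ ^ 2) / (2 * R ^ 2)) / R ^ 2) •
        innerSL ℝ x) x := by
  have hT := ((Real.smoothTransition.contDiff (n := 1)).differentiable one_ne_zero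
    ((3 * R ^ 2 - ‖x‖ ^ 2) / (2 * R ^ 2))).hasDerivAt
  have ha : HasFDerivAt (fun y : E => (3 * R ^ 2 - ‖y‖ ^ 2) / (2 * R ^ 2))
      ((2 * R ^ 2 : ℝ)⁻¹ • -((2 : ℕ) • innerSL ℝ x)) x := by
    simpa only [div_eq_mul_inv] using
      ((hasStrictFDerivAt_norm_sq x).hasFDerivAt.const_sub (3 * R ^ 2)).mul_const (2 * R ^ 2)⁻¹
  refine (hT.comp_hasFDerivAt x ha).congr_fderiv ?_
  ext v
  simp only [smul_neg, neg_apply, smul_apply, coe_innerSL_apply, nsmul_eq_mul, Nat.cast_ofNat,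
    smul_eq_mul]
  field_simp

theorem norm_fderiv_annularCutoff_le {M R : ℝ}
    (hM : ∀ s, |deriv Real.smoothTransition s| ≤ M) (hR : 0 < R) (x : E) :
    ‖fderiv ℝ (annularCutoff R) x‖ ≤ 2 * M / R := by
  have hM0 : 0 ≤ M := (abs_nonneg _).trans (hM 0)
  by_cases hx : x ∈ ball (0 : E) (2 * R) \ ball 0 R
  · have hx2 : ‖x‖ ≤ 2 * R := (mem_ball_zero_iff.1 hx.1).le
    rw [(hasFDerivAt_annularCutoff hR x).fderiv, norm_smul, innerSL_apply_norm, norm_div,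
      norm_neg, Real.norm_eq_abs, norm_pow, Real.norm_eq_abs, abs_of_pos hR]
    calc |deriv Real.smoothTransition ((3 * R ^ 2 - ‖x‖ ^ 2) / (2 * R ^ 2))| / R ^ 2 * ‖x‖
        ≤ M / R ^ 2 * (2 * R) := by gcongr; exact hM _
      _ = 2 * M / R := by field_simp
  · rw [fderiv_annularCutoff_eq_zero hR hx, norm_zero]
    positivity

variable [FiniteDimensional ℝ E] [MeasurableSpace E] [BorelSpace E] {μ : Measure E}
  [IsFiniteMeasureOnCompacts μ]

theorem setIntegral_ball_le_integral_annularCutoff_sq_mul {R : ℝ} {g : E → ℝ} (hR : 0 < R)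
    (hg : Continuous g) (hg0 : 0 ≤ g) :
    ∫ x in ball 0 R, g x ∂μ ≤ ∫ x, annularCutoff R x ^ 2 * g x ∂μ := by
  have hint : Integrable (fun x => annularCutoff R x ^ 2 * g x) μ :=
    ((((contDiff_annularCutoff (n := 0) R).continuous).pow 2).mul hg).integrable_of_support_subset
      (hasCompactSupport_annularCutoff hR) fun x hx h0 => hx (by simp [h0])
  calc ∫ x in ball 0 R, g x ∂μ = ∫ x in ball 0 R, annularCutoff R x ^ 2 * g x ∂μ :=
        setIntegral_congr_fun measurableSet_ball fun x hx => by
          rw [(annularCutoff_eventuallyEq_one (mem_ball_zero_iff.1 hx)).eq_of_nhds, one_pow,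
            one_mul]
    _ ≤ ∫ x, annularCutoff R x ^ 2 * g x ∂μ :=
        setIntegral_le_integral hint
          (Eventually.of_forall fun x => mul_nonneg (sq_nonneg _) (hg0 x))

theorem integral_sq_mul_norm_gradient_annularCutoff_sq_le {M R : ℝ} {w : E → ℝ}
    (hM : ∀ s, |deriv Real.smoothTransition s| ≤ M) (hR : 0 < R) (hw : Continuous w) :
    ∫ x, w x ^ 2 * ‖gradient (annularCutoff R) x‖ ^ 2 ∂μ ≤
      4 * M ^ 2 / R ^ 2 * ∫ x in ball 0 (2 * R) \ ball 0 R, w x ^ 2 ∂μ := by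
  set A := ball (0 : E) (2 * R) \ ball 0 R
  have hA : MeasurableSet A := measurableSet_ball.diff measurableSet_ball
  have hintA : ∀ f : E → ℝ, Continuous f → IntegrableOn f A μ := fun f hf =>
    (hf.continuousOn.integrableOn_compact (isCompact_closedBall 0 (2 * R))).mono_set
      fun x hx => ball_subset_closedBall hx.1
  have hgrad := (contDiff_annularCutoff (E := E) (n := 1) R).continuous_gradient
  rw [← setIntegral_eq_integral_of_forall_compl_eq_zero (s := A) fun x hx => by
      rw [norm_gradient_eq_norm_fderiv, fderiv_annularCutoff_eq_zero hR hx]; simp,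
    ← integral_const_mul]
  refine setIntegral_mono_on (hintA _ ((hw.pow 2).mul (hgrad.norm.pow 2)))
    (hintA _ (continuous_const.mul (hw.pow 2))) hA fun x _ => ?_
  have hbound : ‖gradient (annularCutoff R) x‖ ^ 2 ≤ 4 * M ^ 2 / R ^ 2 := by
    rw [norm_gradient_eq_norm_fderiv]
    calc ‖fderiv ℝ (annularCutoff R) x‖ ^ 2 ≤ (2 * M / R) ^ 2 := by
          gcongr; exact norm_fderiv_annularCutoff_le hM hR x
      _ = 4 * M ^ 2 / R ^ 2 := by ring
  calc w x ^ 2 * ‖gradient (annularCutoff R) x‖ ^ 2 ≤ w x ^ 2 * (4 * M ^ 2 / R ^ 2) := by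
        gcongr
    _ = 4 * M ^ 2 / R ^ 2 * w x ^ 2 := mul_comm _ _

end Cutoff

section Euclidean

variable {N : ℕ}

theorem contDiff_pd {m n : WithTop ℕ∞} {f : EuclideanSpace ℝ (Fin N) → ℝ} (hf : ContDiff ℝ m f)
    (hmn : n + 1 ≤ m) (k : Fin N) : ContDiff ℝ n (pd f k) :=
  (hf.fderiv_right hmn).clm_apply contDiff_const

theorem gradient_apply_eq_pd (f : EuclideanSpace ℝ (Fin N) → ℝ) (x : EuclideanSpace ℝ (Fin N))
    (k : Fin N) : gradient f x k = pd f k x := by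
  have h : ⟪gradient f x, EuclideanSpace.single k (1 : ℝ)⟫_ℝ = pd f k x := toDual_symm_apply
  rwa [EuclideanSpace.inner_single_right, one_mul, conj_trivial] at h

theorem inner_gradient_eq_sum_pd (f g : EuclideanSpace ℝ (Fin N) → ℝ)
    (x : EuclideanSpace ℝ (Fin N)) :
    ⟪gradient f x, gradient g x⟫_ℝ = ∑ k, pd f k x * pd g k x := by
  rw [PiLp.inner_apply]
  simp only [gradient_apply_eq_pd, RCLike.inner_apply, conj_trivial]
  exact sum_congr rfl fun k _ => mul_comm _ _

theorem integral_mul_lap_eq_neg_integral_inner_gradient {f w : EuclideanSpace ℝ (Fin N) → ℝ}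
    (hf : ContDiff ℝ 1 f) (hfc : HasCompactSupport f) (hw : ContDiff ℝ 2 w) :
    ∫ x, f x * lap w x = -∫ x, ⟪gradient f x, gradient w x⟫_ℝ := by
  have hpdw : ∀ k, ContDiff ℝ 1 (pd w k) := fun k => contDiff_pd hw (by norm_num) k
  have hpdf : ∀ k, Continuous (pd f k) := fun k =>
    (contDiff_pd hf (n := 0) (by norm_num) k).continuous
  have hint_pd : ∀ k, Integrable fun x => pd f k x * pd w k x := fun k =>
    ((hpdf k).mul (hpdw k).continuous).integrable_of_hasCompactSupport
      (hfc.fderiv_apply ℝ _).mul_right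
  have hint_lap : ∀ k, Integrable fun x => f x * pd (pd w k) k x := fun k =>
    (hf.continuous.mul (contDiff_pd (hpdw k) (n := 0) (by norm_num) k).continuous
      ).integrable_of_hasCompactSupport hfc.mul_right
  have hibp : ∀ k, ∫ x, f x * pd (pd w k) k x = -∫ x, pd f k x * pd w k x := fun k =>
    integral_mul_fderiv_eq_neg_fderiv_mul_of_integrable (hint_pd k) (hint_lap k)
      ((hf.continuous.mul (hpdw k).continuous).integrable_of_hasCompactSupport hfc.mul_right)
      (fun x _ => hf.differentiable one_ne_zero x)
      (fun x _ => (hpdw k).differentiable one_ne_zero x)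
  simp only [lap, inner_gradient_eq_sum_pd, mul_sum]
  rw [integral_finsetSum _ fun k _ => hint_lap k, integral_finsetSum _ fun k _ => hint_pd k,
    ← sum_neg_distrib]
  exact sum_congr rfl fun k _ => hibp k

theorem integral_sq_mul_norm_gradient_sq_le_of_nonneg_mul_lap {η w : EuclideanSpace ℝ (Fin N) → ℝ}
    (hη : ContDiff ℝ 1 η) (hηc : HasCompactSupport η) (hw : ContDiff ℝ 2 w)
    (hsign : ∀ x, 0 ≤ w x * lap w x) :
    ∫ x, η x ^ 2 * ‖gradient w x‖ ^ 2 ≤ 4 * ∫ x, w x ^ 2 * ‖gradient η x‖ ^ 2 := by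
  have hw1 : ContDiff ℝ 1 w := hw.of_le one_le_two
  set P := fun x => η x ^ 2 * ‖gradient w x‖ ^ 2
  set Q := fun x => w x ^ 2 * ‖gradient η x‖ ^ 2
  set S := fun x => η x * w x * ⟪gradient η x, gradient w x⟫_ℝ
  have hP : Integrable P :=
    Continuous.integrable_of_support_subset (f := P)
      ((hη.continuous.pow 2).mul (hw1.continuous_gradient.norm.pow 2)) hηc
      fun x hx h0 => hx (by simp [P, h0])
  have hQ : Integrable Q :=
    Continuous.integrable_of_support_subset (f := Q)
      ((hw.continuous.pow 2).mul (hη.continuous_gradient.norm.pow 2)) (hηc.fderiv (𝕜 := ℝ))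
      fun x hx h0 => hx (by simp [Q, gradient, h0])
  have hS : Integrable S :=
    Continuous.integrable_of_support_subset (f := S)
      ((hη.continuous.mul hw.continuous).mul
        (hη.continuous_gradient.inner hw1.continuous_gradient)) hηc
      fun x hx h0 => hx (by simp [S, h0])
  have hf : ContDiff ℝ 1 fun x => η x ^ 2 * w x := (hη.pow 2).mul hw1
  have hfc : HasCompactSupport fun x => η x ^ 2 * w x :=
    hηc.mono fun x hx h0 => hx (by simp [h0])
  have hgreen : ∫ x, η x ^ 2 * (w x * lap w x) = -∫ x, (P x + 2 * S x) := by
    simp_rw [← mul_assoc]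
    rw [integral_mul_lap_eq_neg_integral_inner_gradient hf hfc hw]
    congr 2
    funext x
    rw [inner_gradient_sq_mul (hη.differentiable one_ne_zero x)
      (hw1.differentiable one_ne_zero x), real_inner_self_eq_norm_sq]
    ring
  have hyoung : ∀ x, -(2 * S x) ≤ P x / 2 + 2 * Q x := fun x => by
    have := norm_add_sq_real (η x • gradient w x) ((2 * w x) • gradient η x)
    simp only [norm_smul, Real.norm_eq_abs, mul_pow, sq_abs, inner_smul_left, inner_smul_right,
      conj_trivial, real_inner_comm] at this
    simp only [P, Q, S]
    nlinarith [sq_nonneg ‖η x • gradient w x + (2 * w x) • gradient η x‖]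
  have hgreen_nonneg : 0 ≤ ∫ x, η x ^ 2 * (w x * lap w x) :=
    integral_nonneg fun x => mul_nonneg (sq_nonneg _) (hsign x)
  have hyoung_int : ∫ x, -(2 * S x) ≤ ∫ x, (P x / 2 + 2 * Q x) :=
    integral_mono (hS.const_mul 2).neg ((hP.div_const 2).add (hQ.const_mul 2)) hyoung
  rw [integral_add hP (hS.const_mul 2), integral_const_mul] at hgreen
  rw [integral_neg, integral_const_mul, integral_add (hP.div_const 2) (hQ.const_mul 2),
    integral_div, integral_const_mul] at hyoung_int
  linarith

end Euclidean

/-- the Caccioppoli-type estimate for solutions with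
`u_i H_{u_i}(u) ≥ 0`, with a universal constant. -/
theorem stmt_16 : ∃ C : ℝ, 0 < C ∧
    ∀ (N m : ℕ) (H : EuclideanSpace ℝ (Fin m) → ℝ)
      (u : EuclideanSpace ℝ (Fin N) → EuclideanSpace ℝ (Fin m)),
      ContDiff ℝ 2 H → ContDiff ℝ 2 u → IsSolution H u Set.univ →
      (∀ (i : Fin m) (x : EuclideanSpace ℝ (Fin N)), 0 ≤ u x i * Hp H i (u x)) →
      ∀ R : ℝ, 0 < R →
        (∑ i, ∫ x in ball (0 : EuclideanSpace ℝ (Fin N)) R,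
            ‖gradient (fun y => u y i) x‖ ^ 2)
          ≤ C / R ^ 2 *
            ∑ i, ∫ x in ball (0 : EuclideanSpace ℝ (Fin N)) (2 * R) \ ball 0 R,
              (u x i) ^ 2 := by
  obtain ⟨M, hM0, hM⟩ := exists_abs_deriv_smoothTransition_le
  refine ⟨16 * M ^ 2, by positivity, fun N m H u _ hu hsol hsign R hR => ?_⟩
  rw [mul_sum]
  refine sum_le_sum fun i _ => ?_
  have hui : ContDiff ℝ 2 fun y => u y i := contDiff_euclidean.mp hu i
  set η := annularCutoff (E := EuclideanSpace ℝ (Fin N)) R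
  calc ∫ x in ball 0 R, ‖gradient (fun y => u y i) x‖ ^ 2
      ≤ ∫ x, η x ^ 2 * ‖gradient (fun y => u y i) x‖ ^ 2 :=
        setIntegral_ball_le_integral_annularCutoff_sq_mul hR
          ((hui.of_le one_le_two).continuous_gradient.norm.pow 2) fun _ => sq_nonneg _
    _ ≤ 4 * ∫ x, u x i ^ 2 * ‖gradient η x‖ ^ 2 :=
        integral_sq_mul_norm_gradient_sq_le_of_nonneg_mul_lap (contDiff_annularCutoff R)
          (hasCompactSupport_annularCutoff hR) hui
          fun x => hsol i x (Set.mem_univ x) ▸ hsign i x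
    _ ≤ 4 * (4 * M ^ 2 / R ^ 2 * ∫ x in ball 0 (2 * R) \ ball 0 R, u x i ^ 2) := by
        gcongr
        exact integral_sq_mul_norm_gradient_annularCutoff_sq_le hM hR hui.continuous
    _ = 16 * M ^ 2 / R ^ 2 * ∫ x in ball 0 (2 * R) \ ball 0 R, u x i ^ 2 := by ring
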